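/- (Convex hull property) Let q > 0, let k ∈ ℤ, let w_0,…,w_n be positive weights, let b_0,…,b_n be points in ℝ^d, and let R(x) = Σ_{i=0}^{n} b_i·R^n_i(x;q) be the rational quantum trigonometric Bézier curve on [kπ/2, (k+1)π/2]. Then for every x ∈ [kπ/2, (k+1)π/2], the point R(x) lies in the convex hull of the set {b_0, b_1, …, b_n}. -/

import Mathlib

/-- `d(x,y;c) = ((c+1)/2)·sin(y−x) + ((c−1)/2)·sin(y+x)`. -/
noncomputable def dq (x y c : ℝ) : ℝ :=
  (c + 1) / 2 * Real.sin (y - x) + (c - 1) / 2 * Real.sin (y + x)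

/-- The q-integer `[k]_q = 1 + q + ⋯ + q^{k−1}`. -/
noncomputable def qInt (q : ℝ) (k : ℕ) : ℝ := ∑ i ∈ Finset.range k, q ^ i

/-- The q-factorial `[k]_q!`. -/
noncomputable def qFact (q : ℝ) : ℕ → ℝ
  | 0 => 1
  | k + 1 => qInt q (k + 1) * qFact q k

/-- The q-binomial coefficient `[n choose k]_q`. -/
noncomputable def qBinom (q : ℝ) (n k : ℕ) : ℝ :=
  qFact q n / (qFact q k * qFact q (n - k))

/-- Quantum trigonometric Bernstein basis function `B^n_k(x;q)` on `[a,b]`. -/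
noncomputable def qBern (q a b : ℝ) (n k : ℕ) (x : ℝ) : ℝ :=
  qBinom q n k *
    ((∏ i ∈ Finset.range k, dq a x (q ^ i)) * ∏ i ∈ Finset.range (n - k), dq x b (q ^ i)) /
    ∏ i ∈ Finset.range n, dq a b (q ^ i)

/-- A matrix is totally positive if all its minors are nonnegative. -/
def IsTotallyPositive {p r : ℕ} (M : Matrix (Fin p) (Fin r) ℝ) : Prop :=
  ∀ (k : ℕ) (f : Fin k → Fin p) (g : Fin k → Fin r),
    StrictMono f → StrictMono g → 0 ≤ (M.submatrix f g).det

/-- A system of functions is totally positive on `I` if all its collocation matrices at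
increasing points of `I` are totally positive. -/
def IsTotallyPositiveSystem (I : Set ℝ) {n : ℕ} (φ : Fin n → ℝ → ℝ) : Prop :=
  ∀ (m : ℕ) (x : Fin (m + 1) → ℝ), StrictMono x → (∀ j, x j ∈ I) →
    IsTotallyPositive (Matrix.of fun i j => φ i (x j))

/-- Number of sign changes between consecutive entries of a list. -/
noncomputable def signChanges : List ℝ → ℕ
  | [] => 0
  | [_] => 0
  | a :: b :: t => (if a * b < 0 then 1 else 0) + signChanges (b :: t)

/-- `S⁻(v)`: the number of strict sign changes of a finite real sequence, i.e. the number
of sign changes after deleting all zero entries. -/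
noncomputable def strictSignChanges (v : List ℝ) : ℕ :=
  signChanges (v.filter fun x => x ≠ 0)

/-- Rational quantum trigonometric Bernstein basis function `R^n_k(x;q)` with weights `w`. -/
noncomputable def rqBern (q a b : ℝ) (n : ℕ) (w : Fin (n + 1) → ℝ) (k : Fin (n + 1)) (x : ℝ) : ℝ :=
  w k * qBern q a b n k x / ∑ i : Fin (n + 1), w i * qBern q a b n i x

/-! On the quadrant `[kπ/2, (k+1)π/2]` the factor `d` with one argument at an endpoint is the sine
of the distance to that endpoint times a positive constant, so every `B^n_i` is nonnegative there,
and `B^n_n` (for `x` past the left end) or `B^n_0` (at the left end) is positive. With positive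
weights the `R^n_i(x)` are therefore nonnegative with sum `1`, so `R(x)` is a convex combination of
the control points. -/

open Real Finset

lemma sum_div_sum_smul_mem_convexHull {ι E : Type*} [Fintype ι] [AddCommGroup E] [Module ℝ E]
    {c : ι → ℝ} (hc : ∀ i, 0 ≤ c i) (hsum : 0 < ∑ i, c i) (z : ι → E) :
    ∑ i, (c i / ∑ j, c j) • z i ∈ convexHull ℝ (Set.range z) := by
  refine (convex_convexHull ℝ _).sum_mem (fun i _ => div_nonneg (hc i) hsum.le) ?_
    (fun i _ => subset_convexHull ℝ _ (Set.mem_range_self i))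
  rw [← sum_div, div_self hsum.ne']

lemma qFact_pos {q : ℝ} (hq : 0 < q) : ∀ m, 0 < qFact q m
  | 0 => one_pos
  | m + 1 => mul_pos (sum_pos (fun i _ => pow_pos hq i) nonempty_range_add_one) (qFact_pos hq m)

lemma qBinom_pos {q : ℝ} (hq : 0 < q) (n m : ℕ) : 0 < qBinom q n m :=
  div_pos (qFact_pos hq n) (mul_pos (qFact_pos hq m) (qFact_pos hq (n - m)))

section qBern

variable {q a b x : ℝ}

lemma qBern_nonneg (hq : 0 < q) (hax : ∀ i, 0 ≤ dq a x (q ^ i)) (hxb : ∀ i, 0 ≤ dq x b (q ^ i))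
    (hab : ∀ i, 0 ≤ dq a b (q ^ i)) (n m : ℕ) : 0 ≤ qBern q a b n m x :=
  div_nonneg
    (mul_nonneg (qBinom_pos hq n m).le
      (mul_nonneg (prod_nonneg fun i _ => hax i) (prod_nonneg fun i _ => hxb i)))
    (prod_nonneg fun i _ => hab i)

lemma qBern_zero_pos (hq : 0 < q) (hxb : ∀ i, 0 < dq x b (q ^ i))
    (hab : ∀ i, 0 < dq a b (q ^ i)) (n : ℕ) : 0 < qBern q a b n 0 x := by
  rw [qBern, range_zero, prod_empty, one_mul, Nat.sub_zero]
  exact div_pos (mul_pos (qBinom_pos hq n 0) (prod_pos fun i _ => hxb i))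
    (prod_pos fun i _ => hab i)

lemma qBern_self_pos (hq : 0 < q) (hax : ∀ i, 0 < dq a x (q ^ i))
    (hab : ∀ i, 0 < dq a b (q ^ i)) (n : ℕ) : 0 < qBern q a b n n x := by
  rw [qBern, Nat.sub_self, range_zero, prod_empty, mul_one]
  exact div_pos (mul_pos (qBinom_pos hq n n) (prod_pos fun i _ => hax i))
    (prod_pos fun i _ => hab i)

end qBern

section Quadrant

/-- Equals `c` for even `k` and `1` for odd `k`. -/
noncomputable def dqScale (k : ℤ) (c : ℝ) : ℝ := (c + 1) / 2 + (-1 : ℝ) ^ k * ((c - 1) / 2)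

lemma dqScale_pos (k : ℤ) {c : ℝ} (hc : 0 < c) : 0 < dqScale k c := by
  rcases Int.even_or_odd k with hk | hk
  · rw [dqScale, hk.neg_one_zpow]; linarith
  · rw [dqScale, hk.neg_one_zpow]; linarith

variable (k : ℤ) (c x : ℝ)

lemma dq_quadrant_left :
    dq (k * π / 2) x c = sin (x - k * π / 2) * dqScale k c := by
  rw [dq, show x + k * π / 2 = (x - k * π / 2) + k * π by ring, sin_add_int_mul_pi, dqScale]
  ring

lemma dq_quadrant_right :
    dq x ((k + 1) * π / 2) c = sin ((k + 1) * π / 2 - x) * dqScale k c := by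
  have h : ((k : ℝ) + 1) * π / 2 + x = -((k + 1) * π / 2 - x) + ((k + 1 : ℤ) : ℝ) * π := by
    push_cast; ring
  rw [dq, h, sin_add_int_mul_pi, sin_neg, zpow_add_one₀ (by norm_num : (-1 : ℝ) ≠ 0), dqScale]
  ring

lemma dq_quadrant_endpoints : dq (k * π / 2) ((k + 1) * π / 2) c = dqScale k c := by
  rw [dq_quadrant_left, show ((k : ℝ) + 1) * π / 2 - k * π / 2 = π / 2 by ring, sin_pi_div_two,
    one_mul]

variable {k x} {q : ℝ}

lemma qBern_quadrant_nonneg (hq : 0 < q) (hx : x ∈ Set.Icc (k * π / 2) ((k + 1) * π / 2))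
    (n m : ℕ) : 0 ≤ qBern q (k * π / 2) ((k + 1) * π / 2) n m x := by
  obtain ⟨hax, hxb⟩ := hx
  have hπ := pi_pos
  refine qBern_nonneg hq (fun i => ?_) (fun i => ?_) (fun i => ?_) n m
  · rw [dq_quadrant_left]
    exact mul_nonneg (sin_nonneg_of_nonneg_of_le_pi (by linarith) (by linarith))
      (dqScale_pos k (pow_pos hq i)).le
  · rw [dq_quadrant_right]
    exact mul_nonneg (sin_nonneg_of_nonneg_of_le_pi (by linarith) (by linarith))
      (dqScale_pos k (pow_pos hq i)).le
  · exact dq_quadrant_endpoints k (q ^ i) ▸ (dqScale_pos k (pow_pos hq i)).le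

lemma exists_qBern_quadrant_pos (hq : 0 < q) (hx : x ∈ Set.Icc (k * π / 2) ((k + 1) * π / 2))
    (n : ℕ) : ∃ m : Fin (n + 1), 0 < qBern q (k * π / 2) ((k + 1) * π / 2) n m x := by
  have hπ := pi_pos
  have hab : ∀ i, 0 < dq (k * π / 2) ((k + 1) * π / 2) (q ^ i) := fun i =>
    dq_quadrant_endpoints k (q ^ i) ▸ dqScale_pos k (pow_pos hq i)
  rcases hx.1.lt_or_eq with hax | rfl
  · refine ⟨Fin.last n, qBern_self_pos hq (fun i => ?_) hab n⟩
    rw [dq_quadrant_left]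
    exact mul_pos (sin_pos_of_pos_of_lt_pi (by linarith) (by linarith [hx.2]))
      (dqScale_pos k (pow_pos hq i))
  · refine ⟨0, qBern_zero_pos hq (fun i => ?_) hab n⟩
    rw [dq_quadrant_right]
    exact mul_pos (sin_pos_of_pos_of_lt_pi (by linarith) (by linarith))
      (dqScale_pos k (pow_pos hq i))

end Quadrant

/-- Convex hull property: a rational quantum trigonometric Bézier curve lies in the
convex hull of its control points. -/
theorem rational_bezier_convex_hull (n d : ℕ) (q : ℝ) (hq : 0 < q) (k : ℤ)
    (w : Fin (n + 1) → ℝ) (hw : ∀ i, 0 < w i) (bp : Fin (n + 1) → Fin d → ℝ) (x : ℝ)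
    (hx : x ∈ Set.Icc ((k : ℝ) * Real.pi / 2) (((k : ℝ) + 1) * Real.pi / 2)) :
    (∑ i : Fin (n + 1),
        rqBern q ((k : ℝ) * Real.pi / 2) (((k : ℝ) + 1) * Real.pi / 2) n w i x • bp i) ∈
      convexHull ℝ (Set.range bp) := by
  have hB := qBern_quadrant_nonneg hq hx n
  obtain ⟨j, hj⟩ := exists_qBern_quadrant_pos hq hx n
  have hwB : ∀ i, 0 ≤ w i * qBern q (k * π / 2) ((k + 1) * π / 2) n i x :=
    fun i => mul_nonneg (hw i).le (hB i)
  exact sum_div_sum_smul_mem_convexHull hwB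
    (sum_pos' (fun i _ => hwB i) ⟨j, mem_univ j, mul_pos (hw j) hj⟩) bp
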